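/- Let X_1,...,X_n be independent random variables with values in the non-negative integers, with CDFs F_i(m) = P(X_i \le m) and survival functions \bar F_i(m) = P(X_i > m). Then E[X_{r:n}^p] = \sum_{m=0}^{\infty} ((m+1)^p - m^p) \sum_{s=0}^{r-1} \sum_{S \subseteq {1,...,n}, |S|=s} (\prod_{i \in S} F_i(m)) (\prod_{i \notin S} \bar F_i(m)). -/

import Mathlib

open MeasureTheory ProbabilityTheory
open scoped ENNReal

/-- The `r`-th order statistic (r-th smallest, `r ∈ {1,...,n}`) of `X_1,...,X_n`. -/
noncomputable def orderStat {Ω : Type*} {n : ℕ} (r : ℕ) (X : Fin n → Ω → ℕ) (ω : Ω) : ℕ :=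
  sInf {m | r ≤ (Finset.univ.filter (fun i => X i ω ≤ m)).card}

/-!
Layer cake: for `ℕ`-valued `Y` and monotone `f` with `f 0 = 0`, `f Y = ∑_{m < Y} (f (m+1) - f m)`,
so `E[f Y] = ∑ₘ (f (m+1) - f m) P(Y > m)`. The order statistic `X_{r:n}` exceeds `m` exactly when
fewer than `r` of the `X i` are `≤ m`. Splitting this event by the exact set `S` of indices with
`X i ≤ m`, independence gives each piece probability `∏_{i ∈ S} F_i(m) ∏_{i ∉ S} F̄_i(m)`.
-/

open Finset

lemma lintegral_natCast_comp_eq_tsum {Ω : Type*} [MeasurableSpace Ω] (μ : Measure Ω)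
    {Y : Ω → ℕ} (hY : Measurable Y) {f : ℕ → ℕ} (hf : Monotone f) (hf0 : f 0 = 0) :
    ∫⁻ ω, (f (Y ω) : ℝ≥0∞) ∂μ
      = ∑' m : ℕ, ((f (m + 1) - f m : ℕ) : ℝ≥0∞) * μ {ω | m < Y ω} := by
  have hmeas : ∀ m, MeasurableSet {ω | m < Y ω} := fun m => measurableSet_lt measurable_const hY
  have htelescope : ∀ ω, (f (Y ω) : ℝ≥0∞)
      = ∑' m : ℕ, {ω | m < Y ω}.indicator (fun _ => ((f (m + 1) - f m : ℕ) : ℝ≥0∞)) ω := by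
    intro ω
    rw [tsum_eq_sum (s := range (Y ω)) fun m hm => by simp_all,
      sum_congr rfl fun m hm => Set.indicator_of_mem (by simpa using hm) _, ← Nat.cast_sum,
      sum_range_tsub hf, hf0, Nat.sub_zero]
  simp_rw [htelescope]
  rw [lintegral_tsum fun m => (measurable_const.indicator (hmeas m)).aemeasurable]
  exact tsum_congr fun m => lintegral_indicator_const (hmeas m) _

section Independence

variable {Ω ι : Type*} [Fintype ι] [DecidableEq ι] {β : ι → Type*} {X : ∀ i, Ω → β i}
  {A : ∀ i, Set (β i)} [∀ i, DecidablePred (· ∈ A i)]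

theorem setOf_filter_mem_eq_iInter (S : Finset ι) :
    {ω | ({i | X i ω ∈ A i} : Finset ι) = S} = ⋂ i, X i ⁻¹' if i ∈ S then A i else (A i)ᶜ := by
  ext ω
  simp only [Set.mem_ofPred_eq, Set.mem_iInter, Set.mem_preimage, Finset.ext_iff, mem_filter,
    mem_univ, true_and]
  refine forall_congr' fun i => ?_
  by_cases hi : i ∈ S <;> simp [hi]

variable [MeasurableSpace Ω] [∀ i, MeasurableSpace (β i)]

theorem measurableSet_setOf_filter_mem_eq (hX : ∀ i, Measurable (X i))
    (hA : ∀ i, MeasurableSet (A i)) (S : Finset ι) :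
    MeasurableSet {ω | ({i | X i ω ∈ A i} : Finset ι) = S} := by
  rw [setOf_filter_mem_eq_iInter]
  exact .iInter fun i => hX i (by split_ifs; exacts [hA i, (hA i).compl])

theorem ProbabilityTheory.iIndepFun.measure_setOf_filter_mem_eq {μ : Measure Ω}
    (hindep : iIndepFun X μ) (hA : ∀ i, MeasurableSet (A i)) (S : Finset ι) :
    μ {ω | ({i | X i ω ∈ A i} : Finset ι) = S}
      = (∏ i ∈ S, μ (X i ⁻¹' A i)) * ∏ i ∈ Sᶜ, μ (X i ⁻¹' (A i)ᶜ) := by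
  rw [setOf_filter_mem_eq_iInter, hindep.meas_iInter fun i =>
    ⟨_, by split_ifs; exacts [hA i, (hA i).compl], rfl⟩, ← prod_mul_prod_compl S]
  congr 1 <;> refine prod_congr rfl fun i hi => ?_ <;> simp_all

end Independence

section OrderStat

variable {Ω : Type*} {n r : ℕ} {X : Fin n → Ω → ℕ}

-- For `r > n` the defining set is empty and `sInf ∅ = 0`.
theorem orderStat_le_iff (hrn : r ≤ n) (ω : Ω) (m : ℕ) :
    orderStat r X ω ≤ m ↔ r ≤ #{i | X i ω ≤ m} := by
  refine ⟨fun h => ?_, fun h => Nat.sInf_le h⟩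
  have hne : {k | r ≤ #{i | X i ω ≤ k}}.Nonempty :=
    ⟨univ.sup (X · ω), by simpa [filter_true_of_mem fun i _ => le_sup (f := (X · ω)) (mem_univ i)]⟩
  exact (Nat.sInf_mem hne).trans (card_le_card fun i => by simpa using fun hi => hi.trans h)

theorem lt_orderStat_iff (hrn : r ≤ n) (ω : Ω) (m : ℕ) :
    m < orderStat r X ω ↔ #{i | X i ω ≤ m} < r := by
  simpa only [not_le] using (orderStat_le_iff hrn ω m).not

variable [MeasurableSpace Ω]

theorem measurable_orderStat (hrn : r ≤ n) (hX : ∀ i, Measurable (X i)) :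
    Measurable (orderStat r X) := by
  refine measurable_of_Iic fun m => ?_
  have hcard : Measurable fun ω => #{i | X i ω ≤ m} := by
    simp_rw [card_filter]
    exact measurable_sum _ fun i _ =>
      Measurable.ite (measurableSet_le (hX i) measurable_const) measurable_const measurable_const
  simpa only [Set.preimage, Set.mem_Iic, orderStat_le_iff hrn] using
    measurableSet_le measurable_const hcard

theorem measure_lt_orderStat_eq_sum (μ : Measure Ω) (hX : ∀ i, Measurable (X i)) (hrn : r ≤ n)
    (m : ℕ) :
    μ {ω | m < orderStat r X ω} = ∑ s ∈ range r, ∑ S ∈ powersetCard s univ,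
      μ {ω | ({i | X i ω ∈ Set.Iic m} : Finset (Fin n)) = S} := by
  have hpreimage : {ω | m < orderStat r X ω}
      = (fun ω => ({i | X i ω ∈ Set.Iic m} : Finset (Fin n))) ⁻¹'
          ↑((range r).biUnion (powersetCard · (univ : Finset (Fin n)))) := by
    ext ω
    simp [lt_orderStat_iff hrn]
  rw [hpreimage, ← sum_measure_preimage_singleton _ fun S _ =>
    measurableSet_setOf_filter_mem_eq hX (fun _ => measurableSet_Iic) S]
  exact sum_biUnion fun _ _ _ _ hst => pairwise_disjoint_powersetCard _ hst

end OrderStat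

theorem stmt5_general {Ω : Type*} [MeasurableSpace Ω] (μ : Measure Ω)
    {n : ℕ} (X : Fin n → Ω → ℕ) (hX : ∀ i, Measurable (X i))
    (hindep : iIndepFun X μ)
    (r : ℕ) (hrn : r ≤ n) (p : ℕ) (hp : 1 ≤ p) :
    ∫⁻ ω, ((orderStat r X ω ^ p : ℕ) : ℝ≥0∞) ∂μ
      = ∑' m : ℕ, (((m + 1) ^ p - m ^ p : ℕ) : ℝ≥0∞) *
          ∑ s ∈ Finset.range r, ∑ S ∈ Finset.powersetCard s (Finset.univ : Finset (Fin n)),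
            (∏ i ∈ S, μ {ω | X i ω ≤ m}) * ∏ i ∈ Sᶜ, μ {ω | m < X i ω} := by
  refine (lintegral_natCast_comp_eq_tsum μ (measurable_orderStat hrn hX) (pow_left_mono p)
    (zero_pow (Nat.one_le_iff_ne_zero.mp hp))).trans (tsum_congr fun m => ?_)
  rw [measure_lt_orderStat_eq_sum μ hX hrn m]
  congr! with s - S -
  rw [hindep.measure_setOf_filter_mem_eq fun _ => measurableSet_Iic, Set.compl_Iic]
  rfl

theorem stmt5 {Ω : Type*} [MeasurableSpace Ω] (μ : Measure Ω) [IsProbabilityMeasure μ]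
    {n : ℕ} (X : Fin n → Ω → ℕ) (hX : ∀ i, Measurable (X i))
    (hindep : iIndepFun X μ)
    (r : ℕ) (hr : 1 ≤ r) (hrn : r ≤ n) (p : ℕ) (hp : 1 ≤ p) :
    ∫⁻ ω, ((orderStat r X ω ^ p : ℕ) : ℝ≥0∞) ∂μ
      = ∑' m : ℕ, (((m + 1) ^ p - m ^ p : ℕ) : ℝ≥0∞) *
          ∑ s ∈ Finset.range r, ∑ S ∈ Finset.powersetCard s (Finset.univ : Finset (Fin n)),
            (∏ i ∈ S, μ {ω | X i ω ≤ m}) * ∏ i ∈ Sᶜ, μ {ω | m < X i ω} :=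
  stmt5_general μ X hX hindep r hrn p hp
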